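/- Let a₁,a₂ ∈ F, n₁,n₂ ∈ ℤ and h ∈ F[X] be data for the change-of-variables conjecture whose depth is non-negative. Then the conjecture is true for this data: for every Schwartz–Bruhat function f on K×K, with g the lift of f at (a₁,a₂),(n₁,n₂), the function Φ(x,y) = g(x, y − h(x)) is Fubini on F×F with repeated integral ∫_K∫_K f(u,v) du dv · X^{n₁+n₂}. -/

import Mathlib

noncomputable section

open MeasureTheory Polynomial
open scoped Classical

/-- The field `ℂ(X)` of complex rational functions. -/
abbrev CX : Type := RatFunc ℂ

/-- A complete discrete valuation field with residue field `K`: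
`Fc` is the field, `O` its ring of integers, `t` a fixed prime element,
`res` the residue map and `ν` the discrete valuation.  The axioms say that `O` is a
valuation subring of `Fc`, `t` is irreducible in `O`, `res` is surjective with kernel
`tO`, every nonzero element is a unit times `t ^ ν`, and `O` is `t`-adically complete. -/
structure CDVF (K : Type) [Field K] : Type 1 where
  Fc : Type
  fieldF : Field Fc
  O : Subring Fc
  t : Fc
  ht : t ∈ O
  res : O →+* K
  ν : Fc → ℤ
  hval : ∀ x : Fc, x ∈ O ∨ x⁻¹ ∈ O
  hirr : Irreducible (⟨t, ht⟩ : O)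
  hres_surj : Function.Surjective res
  hres_ker : ∀ x : O, res x = 0 ↔ (⟨t, ht⟩ : O) ∣ x
  hν : ∀ x : Fc, x ≠ 0 → ∃ u : O, IsUnit u ∧ x = (u : Fc) * t ^ ν x
  hcomplete : ∀ s : ℕ → O, (∀ n : ℕ, (⟨t, ht⟩ : O) ^ n ∣ (s (n + 1) - s n)) →
    ∃ L : O, ∀ n : ℕ, (⟨t, ht⟩ : O) ^ n ∣ (L - s n)

attribute [instance] CDVF.fieldF

namespace CDVF

variable {K : Type} [Field K] (E : CDVF K)

/-- The residue map, extended by zero outside the ring of integers. -/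
def resF (x : E.Fc) : K := if h : x ∈ E.O then E.res ⟨x, h⟩ else 0

/-- The translated fractional ideal `a + t^c O`. -/
def tfi (a : E.Fc) (c : ℤ) : Set E.Fc := {y : E.Fc | ∃ z ∈ E.O, y = a + E.t ^ c * z}

/-- The lift `f⁰` of a function on the residue field. -/
def lift0 (f : K → ℂ) : E.Fc → CX := fun x =>
  if x ∈ E.O then algebraMap ℂ CX (f (E.resF x)) else 0

/-- The lift `f^{a,n}` of `f` at `a, n`, determined by `f^{a,n}(a + t^n x) = f⁰(x)`. -/
def liftAt (f : K → ℂ) (a : E.Fc) (n : ℤ) : E.Fc → CX := fun z =>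
  E.lift0 f (E.t ^ (-n) * (z - a))

/-- The two-dimensional lift `f⁰` of `f : K × K → ℂ`. -/
def lift0₂ (f : K × K → ℂ) : E.Fc → E.Fc → CX := fun x y =>
  if x ∈ E.O ∧ y ∈ E.O then algebraMap ℂ CX (f (E.resF x, E.resF y)) else 0

/-- The lift of `f : K × K → ℂ` at `(a₁,a₂),(n₁,n₂)`. -/
def liftAt₂ (f : K × K → ℂ) (a₁ a₂ : E.Fc) (n₁ n₂ : ℤ) : E.Fc → E.Fc → CX := fun z w =>
  E.lift0₂ f (E.t ^ (-n₁) * (z - a₁)) (E.t ^ (-n₂) * (w - a₂))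

/-- The space `L(F)` of integrable functions on `F`: the `ℂ(X)`-span of the lifts
`f^{a,n}` of Haar integrable functions `f` on the residue field. -/
def LF [MeasurableSpace K] (μ : Measure K) : Submodule CX (E.Fc → CX) :=
  Submodule.span CX
    {g : E.Fc → CX | ∃ f : K → ℂ, Integrable f μ ∧ ∃ (a : E.Fc) (n : ℤ), g = E.liftAt f a n}

/-- `Φ(x,y) = f⁰(x, y − t^R q(x))`. -/
def Phi (f : K × K → ℂ) (R : ℤ) (q : Polynomial E.O) : E.Fc → E.Fc → CX := fun x y =>
  E.lift0₂ f x (y - E.t ^ R * Polynomial.eval x (q.map E.O.subtype))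

/-- The non-singular part `Φ_ns` of `Φ`: the restriction of `Φ` to `W_ns × F`,
extended by zero, where `W_ns = {x ∈ O : q̄′(x̄) ≠ 0}`. -/
def PhiNS (f : K × K → ℂ) (R : ℤ) (q : Polynomial E.O) : E.Fc → E.Fc → CX := fun x y =>
  if x ∈ E.O ∧ Polynomial.eval (E.resF x) (Polynomial.derivative (q.map E.res)) ≠ 0 then
    E.Phi f R q x y else 0

/-- The singular part `Φ_sing` of `Φ`: the restriction of `Φ` to `W_sing × F`,
extended by zero, where `W_sing = {x ∈ O : q̄′(x̄) = 0}`. -/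
def PhiSing (f : K × K → ℂ) (R : ℤ) (q : Polynomial E.O) : E.Fc → E.Fc → CX := fun x y =>
  if x ∈ E.O ∧ Polynomial.eval (E.resF x) (Polynomial.derivative (q.map E.res)) = 0 then
    E.Phi f R q x y else 0

end CDVF

section Normed

variable {K : Type} [NontriviallyNormedField K]

/-- The absolute value `|α| = |res(α t^{−ν(α)})|_K ⬝ X^{ν(α)} ∈ ℂ(X)` of `α ∈ F^×`. -/
def CDVF.absF (E : CDVF K) (α : E.Fc) : CX :=
  algebraMap ℂ CX ((‖E.resF (α * E.t ^ (-E.ν α))‖ : ℝ) : ℂ) * RatFunc.X ^ E.ν α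

/-- Schwartz–Bruhat functions on `K × K` (for nonarchimedean `K`: the locally constant
functions of compact support). -/
def IsSB (f : K × K → ℂ) : Prop := IsLocallyConstant f ∧ HasCompactSupport f

variable [MeasurableSpace K] (μ : Measure K)

/-- A Haar integrable `f : K × K → ℂ` is Fubini: both repeated integrals exist and agree. -/
def KFubini (f : K × K → ℂ) : Prop :=
  Integrable f (μ.prod μ) ∧
  (∀ u : K, Integrable (fun v => f (u, v)) μ) ∧
  (∀ v : K, Integrable (fun u => f (u, v)) μ) ∧
  Integrable (fun u => ∫ v, f (u, v) ∂μ) μ ∧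
  Integrable (fun v => ∫ u, f (u, v) ∂μ) μ ∧
  (∫ u, ∫ v, f (u, v) ∂μ ∂μ) = ∫ v, ∫ u, f (u, v) ∂μ ∂μ

/-- `I` is the two-dimensional integral `∫^F` on `L(F)`: a `ℂ(X)`-linear functional which
lifts the Haar integral, is translation invariant, and is compatible with multiplicative
structure. -/
def CDVF.IsIntegralF (E : CDVF K) (I : (E.Fc → CX) →ₗ[CX] CX) : Prop :=
  (∀ f : K → ℂ, Integrable f μ → I (E.lift0 f) = algebraMap ℂ CX (∫ u, f u ∂μ)) ∧
  (∀ g ∈ E.LF μ, ∀ a : E.Fc, I (fun x => g (x + a)) = I g) ∧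
  (∀ g ∈ E.LF μ, ∀ α : E.Fc, α ≠ 0 → I (fun x => g (α * x)) = (E.absF α)⁻¹ * I g)

/-- A `ℂ(X)`-valued function on `F × F` is Fubini (with respect to the integral `I`):
all sections and repeated integrands are integrable and the two repeated integrals agree. -/
def CDVF.FFubini (E : CDVF K) (I : (E.Fc → CX) →ₗ[CX] CX) (g : E.Fc → E.Fc → CX) : Prop :=
  (∀ x : E.Fc, (fun y => g x y) ∈ E.LF μ) ∧
  ((fun x => I (fun y => g x y)) ∈ E.LF μ) ∧
  (∀ y : E.Fc, (fun x => g x y) ∈ E.LF μ) ∧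
  ((fun y => I (fun x => g x y)) ∈ E.LF μ) ∧
  I (fun x => I (fun y => g x y)) = I (fun y => I (fun x => g x y))

/-- The conclusion of the change-of-variables conjecture for the data
`a₁, a₂, n₁, n₂, h`: for every Schwartz–Bruhat `f` on `K × K`, with `g` the lift of `f` at
`(a₁,a₂),(n₁,n₂)`, the function `(x,y) ↦ g(x, y − h(x))` is Fubini on `F × F` with
repeated integral `∫∫ f du dv ⬝ X^{n₁+n₂}`. -/
def CDVF.ConjHolds (E : CDVF K) (I : (E.Fc → CX) →ₗ[CX] CX)
    (a₁ a₂ : E.Fc) (n₁ n₂ : ℤ) (h : Polynomial E.Fc) : Prop :=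
  ∀ f : K × K → ℂ, IsSB f →
    E.FFubini μ I (fun x y => E.liftAt₂ f a₁ a₂ n₁ n₂ x (y - Polynomial.eval x h)) ∧
    I (fun y => I (fun x => E.liftAt₂ f a₁ a₂ n₁ n₂ x (y - Polynomial.eval x h))) =
      algebraMap ℂ CX (∫ v, ∫ u, f (u, v) ∂μ ∂μ) * RatFunc.X ^ (n₁ + n₂)

end Normed


/-!
Write `x = a₁ + t^{n₁} U` and `y = a₂ + h(a₁) + t^{n₂} V`. Because the depth `m = R - n₂` is
non-negative, `y - h(x)` corresponds to `V - t^m q(U)` with `t^m q(U) ∈ O`, so on residues the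
substitution is the shear `v ↦ v - ε q̄(u)` of `K × K`, where `ε = res(t^m)`. Hence
`(x, y) ↦ g(x, y - h(x))` is itself the lift at `(a₁, a₂ + h(a₁)), (n₁, n₂)` of the
Schwartz–Bruhat function `φ(u, v) = f(u, v - ε q̄(u))`. The lift of any Fubini function is
Fubini with repeated integral `∫∫ φ ⬝ X^{n₁+n₂}`: each section is a one-dimensional lift, whose
integral is computed by the translation and scaling rules. Finally `∫∫ φ = ∫∫ f`, since each
inner integral of `φ` is a translate of the corresponding inner integral of `f`.
-/

section Shear

variable {G M : Type*} [AddGroup G]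

def shear (g : G → G) (f : G × G → M) : G × G → M := fun w => f (w.1, w.2 - g w.1)

variable [TopologicalSpace G] [IsTopologicalAddGroup G] {g : G → G} {f : G × G → M}

theorem Continuous.shear [TopologicalSpace M] (hf : Continuous f) (hg : Continuous g) :
    Continuous (shear g f) :=
  hf.comp (by fun_prop)

theorem HasCompactSupport.shear [Zero M] (hf : HasCompactSupport f) (hg : Continuous g) :
    HasCompactSupport (shear g f) :=
  hf.comp_homeomorph
    { toEquiv := (Equiv.refl G).prodShear fun u => Equiv.subRight (g u)
      continuous_toFun := show Continuous fun w : G × G => (w.1, w.2 - g w.1) by fun_prop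
      continuous_invFun := show Continuous fun w : G × G => (w.1, w.2 + g w.1) by fun_prop }

end Shear

section ProdSections

variable {X Y M : Type*} [TopologicalSpace X] [TopologicalSpace Y] [Zero M] {f : X × Y → M}

theorem HasCompactSupport.comp_prodMk_left [T2Space Y] (hf : HasCompactSupport f) (x : X) :
    HasCompactSupport fun y => f (x, y) :=
  .intro (hf.image continuous_snd) fun _ hy =>
    image_eq_zero_of_notMem_tsupport fun h => hy ⟨_, h, rfl⟩

theorem HasCompactSupport.comp_prodMk_right [T2Space X] (hf : HasCompactSupport f) (y : Y) :
    HasCompactSupport fun x => f (x, y) :=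
  .intro (hf.image continuous_fst) fun _ hx =>
    image_eq_zero_of_notMem_tsupport fun h => hx ⟨_, h, rfl⟩

end ProdSections

section Fubini

variable {K : Type} [NontriviallyNormedField K] [MeasurableSpace K] [BorelSpace K]
  (μ : Measure K) [μ.IsAddHaarMeasure]

theorem kFubini_of_continuous_of_hasCompactSupport [LocallyCompactSpace K] {f : K × K → ℂ}
    (hc : Continuous f) (hs : HasCompactSupport f) : KFubini μ f := by
  -- properness makes `K` σ-compact, hence the Haar measure σ-finite, as Fubini requires
  have : ProperSpace K := .of_locallyCompactSpace K
  have hint : Integrable f (μ.prod μ) := hc.integrable_of_hasCompactSupport hs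
  have hsec : ∀ u, Integrable (fun v => f (u, v)) μ := fun u =>
    (hc.comp (Continuous.prodMk_right u)).integrable_of_hasCompactSupport
      (hs.comp_prodMk_left u)
  have hsec' : ∀ v, Integrable (fun u => f (u, v)) μ := fun v =>
    (hc.comp (Continuous.prodMk_left v)).integrable_of_hasCompactSupport
      (hs.comp_prodMk_right v)
  exact ⟨hint, hsec, hsec', hint.integral_prod_left, hint.integral_prod_right,
    integral_integral_swap hint⟩

theorem integral_integral_shear {f : K × K → ℂ} (g : K → K) :
    ∫ u, ∫ v, shear g f (u, v) ∂μ ∂μ = ∫ u, ∫ v, f (u, v) ∂μ ∂μ := by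
  congr 1 with u
  exact integral_sub_right_eq_self (fun v => f (u, v)) (g u)

end Fubini

namespace CDVF

section ResidueField

variable {K : Type} [Field K] (E : CDVF K)

theorem t_ne_zero : E.t ≠ 0 := fun h =>
  E.hirr.ne_zero (Subtype.ext h)

theorem t_zpow_mem {k : ℤ} (hk : 0 ≤ k) : E.t ^ k ∈ E.O := by
  lift k to ℕ using hk
  simpa using E.O.pow_mem E.ht k

theorem not_isUnit_of_coe_eq_t_pow {u : E.O} {n : ℕ} (hn : n ≠ 0) (h : (u : E.Fc) = E.t ^ n) :
    ¬IsUnit u := by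
  rw [show u = ⟨E.t, E.ht⟩ ^ n from Subtype.ext (by simpa using h), isUnit_pow_iff hn]
  exact E.hirr.not_isUnit

theorem eq_zero_of_coe_eq_t_zpow {u : E.O} (hu : IsUnit u) {m : ℤ} (h : (u : E.Fc) = E.t ^ m) :
    m = 0 := by
  obtain ⟨n, rfl | rfl⟩ := Int.eq_nat_or_neg m
  · by_contra hn
    exact E.not_isUnit_of_coe_eq_t_pow (n := n) (by omega) (by simpa using h) hu
  · obtain ⟨v, huv⟩ := hu.exists_right_inv
    have hv : (v : E.Fc) = E.t ^ n := by
      have huv' : (u : E.Fc) * v = 1 := by simpa using congrArg Subtype.val huv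
      rw [h, zpow_neg, zpow_natCast] at huv'
      field_simp at huv'
      rwa [div_eq_one_iff_eq (pow_ne_zero n E.t_ne_zero)] at huv'
    by_contra hn
    exact E.not_isUnit_of_coe_eq_t_pow (n := n) (by omega) hv (.of_mul_eq_one_right u huv)

theorem ν_t_zpow (k : ℤ) : E.ν (E.t ^ k) = k := by
  obtain ⟨u, hu, h⟩ := E.hν _ (zpow_ne_zero k E.t_ne_zero)
  have hu' : (u : E.Fc) = E.t ^ (k - E.ν (E.t ^ k)) := by
    rw [zpow_sub₀ E.t_ne_zero, eq_div_iff (zpow_ne_zero _ E.t_ne_zero), ← h]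
  linarith [E.eq_zero_of_coe_eq_t_zpow hu hu']

theorem resF_coe (x : E.O) : E.resF x = E.res x := by
  simp [resF]

variable {E} (f : K × K → ℂ) (a₁ a₂ : E.Fc) (n₁ n₂ : ℤ)

theorem liftAt₂_swap (x y : E.Fc) :
    E.liftAt₂ (f ∘ Prod.swap) a₂ a₁ n₂ n₁ y x = E.liftAt₂ f a₁ a₂ n₁ n₂ x y := by
  simp [liftAt₂, lift0₂, and_comm]

theorem liftAt₂_section (x : E.Fc) :
    (fun y => E.liftAt₂ f a₁ a₂ n₁ n₂ x y) =
      if E.t ^ (-n₁) * (x - a₁) ∈ E.O then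
        E.liftAt (fun v => f (E.resF (E.t ^ (-n₁) * (x - a₁)), v)) a₂ n₂
      else 0 := by
  ext y
  split_ifs with hx <;>
    simp only [liftAt₂, lift0₂, liftAt, lift0, hx, true_and, false_and, if_false, Pi.zero_apply]

variable (E) {a₁ a₂ n₁ n₂}

theorem lift0₂_sub_mul_eval {c : E.Fc} (hc : c ∈ E.O) (q : Polynomial E.O) (U V : E.Fc) :
    E.lift0₂ f U (V - c * (q.map E.O.subtype).eval U) =
      E.lift0₂ (shear (fun u => E.resF c * (q.map E.res).eval u) f) U V := by
  by_cases hU : U ∈ E.O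
  swap
  · simp [lift0₂, hU]
  lift U to E.O using hU
  lift c to E.O using hc
  have heval : (q.map E.O.subtype).eval (U : E.Fc) = (q.eval U : E.O) :=
    eval_map_apply E.O.subtype U
  have hres : E.res (c * q.eval U) = E.resF c * (q.map E.res).eval (E.resF U) := by
    simp [resF_coe]
  rw [heval, ← Subring.coe_mul]
  generalize c * q.eval U = d at hres
  by_cases hV : V ∈ E.O
  · lift V to E.O using hV
    have hsub : (V : E.Fc) - d = ((V - d : E.O) : E.Fc) := rfl
    simp only [lift0₂, shear, hsub, resF_coe, map_sub, hres, SetLike.coe_mem, and_self, if_true]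
  · have hV' : V - (d : E.Fc) ∉ E.O := fun h => hV (by simpa using E.O.add_mem h d.2)
    simp only [lift0₂, hV, hV', and_false, if_false]

theorem liftAt₂_sub_eval {R : ℤ} {h : Polynomial E.Fc} {q : Polynomial E.O}
    (hdecomp : ∀ x : E.Fc, Polynomial.eval (a₁ + E.t ^ n₁ * x) h =
      Polynomial.eval a₁ h + E.t ^ R * Polynomial.eval x (q.map E.O.subtype))
    (hdepth : 0 ≤ R - n₂) (x y : E.Fc) :
    E.liftAt₂ f a₁ a₂ n₁ n₂ x (y - h.eval x) =
      E.liftAt₂ (shear (fun u => E.resF (E.t ^ (R - n₂)) * (q.map E.res).eval u) f)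
        a₁ (a₂ + h.eval a₁) n₁ n₂ x y := by
  set U := E.t ^ (-n₁) * (x - a₁)
  have hx : a₁ + E.t ^ n₁ * U = x := by
    simp [U, zpow_neg, mul_inv_cancel_left₀ (zpow_ne_zero n₁ E.t_ne_zero)]
  have hy : E.t ^ (-n₂) * (y - h.eval x - a₂) =
      E.t ^ (-n₂) * (y - (a₂ + h.eval a₁)) - E.t ^ (R - n₂) * (q.map E.O.subtype).eval U := by
    rw [← hx, hdecomp, sub_eq_add_neg R, zpow_add₀ E.t_ne_zero]
    ring
  show E.lift0₂ f U _ = E.lift0₂ _ U _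
  rw [hy]
  exact E.lift0₂_sub_mul_eval f (E.t_zpow_mem hdepth) q U _

end ResidueField

variable {K : Type} [NontriviallyNormedField K] (E : CDVF K)

theorem absF_t_zpow (k : ℤ) : E.absF (E.t ^ k) = RatFunc.X ^ k := by
  rw [absF, E.ν_t_zpow, ← zpow_add₀ E.t_ne_zero, add_neg_cancel, zpow_zero,
    show (1 : E.Fc) = ((1 : E.O) : E.Fc) from rfl, E.resF_coe]
  simp

variable [MeasurableSpace K] {μ : Measure K}

theorem liftAt_mem_LF {f : K → ℂ} (hf : Integrable f μ) (a : E.Fc) (n : ℤ) :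
    E.liftAt f a n ∈ E.LF μ :=
  Submodule.subset_span ⟨f, hf, a, n, rfl⟩

variable {E} {I : (E.Fc → CX) →ₗ[CX] CX}

theorem IsIntegralF.apply_liftAt (hI : E.IsIntegralF μ I) {f : K → ℂ} (hf : Integrable f μ)
    (a : E.Fc) (n : ℤ) :
    I (E.liftAt f a n) = RatFunc.X ^ n * algebraMap ℂ CX (∫ u, f u ∂μ) := by
  have htrans : E.liftAt f a n = fun z => E.liftAt f 0 n (z + -a) := by
    ext z; simp [liftAt, sub_eq_add_neg]
  have hscale : E.liftAt f 0 n = fun z => E.lift0 f (E.t ^ (-n) * z) := by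
    ext z; simp [liftAt]
  have hlift0 : E.lift0 f = E.liftAt f 0 0 := by
    ext z; simp [liftAt]
  rw [htrans, hI.2.1 _ (E.liftAt_mem_LF hf 0 n), hscale,
    hI.2.2 _ (hlift0 ▸ E.liftAt_mem_LF hf 0 0) _ (zpow_ne_zero _ E.t_ne_zero),
    hI.1 f hf, E.absF_t_zpow, zpow_neg, inv_inv]

variable {φ : K × K → ℂ} (a₁ a₂ : E.Fc) (n₁ n₂ : ℤ)

theorem liftAt₂_section_mem_LF (hsec : ∀ u, Integrable (fun v => φ (u, v)) μ) (x : E.Fc) :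
    (fun y => E.liftAt₂ φ a₁ a₂ n₁ n₂ x y) ∈ E.LF μ := by
  rw [liftAt₂_section]
  split_ifs
  · exact E.liftAt_mem_LF (hsec _) a₂ n₂
  · exact (E.LF μ).zero_mem

theorem IsIntegralF.apply_liftAt₂_section (hI : E.IsIntegralF μ I)
    (hsec : ∀ u, Integrable (fun v => φ (u, v)) μ) :
    (fun x => I (fun y => E.liftAt₂ φ a₁ a₂ n₁ n₂ x y)) =
      (RatFunc.X : CX) ^ n₂ • E.liftAt (fun u => ∫ v, φ (u, v) ∂μ) a₁ n₁ := by
  ext x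
  rw [liftAt₂_section]
  split_ifs with hx
  · rw [hI.apply_liftAt (hsec _), Pi.smul_apply, smul_eq_mul]
    simp only [liftAt, lift0, hx, if_true]
  · rw [map_zero, Pi.smul_apply, smul_eq_mul]
    simp only [liftAt, lift0, hx, if_false, mul_zero]

theorem IsIntegralF.fFubini_liftAt₂ (hI : E.IsIntegralF μ I) (hφ : KFubini μ φ) :
    E.FFubini μ I (E.liftAt₂ φ a₁ a₂ n₁ n₂) ∧
      I (fun y => I (fun x => E.liftAt₂ φ a₁ a₂ n₁ n₂ x y)) =
        algebraMap ℂ CX (∫ v, ∫ u, φ (u, v) ∂μ ∂μ) * RatFunc.X ^ (n₁ + n₂) := by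
  obtain ⟨-, hsec₁, hsec₂, hint₁, hint₂, hswap⟩ := hφ
  have hswapped : (fun y => I (fun x => E.liftAt₂ φ a₁ a₂ n₁ n₂ x y)) =
      (RatFunc.X : CX) ^ n₁ • E.liftAt (fun v => ∫ u, φ (u, v) ∂μ) a₂ n₂ := by
    simp_rw [← liftAt₂_swap φ a₁ a₂ n₁ n₂]
    exact hI.apply_liftAt₂_section (φ := φ ∘ Prod.swap) a₂ a₁ n₂ n₁ hsec₂
  have hrepeated : I (fun y => I (fun x => E.liftAt₂ φ a₁ a₂ n₁ n₂ x y)) =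
      algebraMap ℂ CX (∫ v, ∫ u, φ (u, v) ∂μ ∂μ) * RatFunc.X ^ (n₁ + n₂) := by
    rw [hswapped, map_smul, hI.apply_liftAt hint₂, smul_eq_mul,
      zpow_add₀ (RatFunc.X_ne_zero (K := ℂ))]
    ring
  refine ⟨⟨liftAt₂_section_mem_LF a₁ a₂ n₁ n₂ hsec₁, ?_, fun y => ?_, ?_, ?_⟩, hrepeated⟩
  · rw [hI.apply_liftAt₂_section a₁ a₂ n₁ n₂ hsec₁]
    exact (E.LF μ).smul_mem _ (E.liftAt_mem_LF hint₁ a₁ n₁)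
  · simp_rw [← liftAt₂_swap φ a₁ a₂ n₁ n₂ _ y]
    exact liftAt₂_section_mem_LF (φ := φ ∘ Prod.swap) a₂ a₁ n₂ n₁ hsec₂ y
  · rw [hswapped]
    exact (E.LF μ).smul_mem _ (E.liftAt_mem_LF hint₂ a₂ n₂)
  · rw [hrepeated, hI.apply_liftAt₂_section a₁ a₂ n₁ n₂ hsec₁, map_smul,
      hI.apply_liftAt hint₁, smul_eq_mul, hswap, zpow_add₀ (RatFunc.X_ne_zero (K := ℂ))]
    ring

end CDVF

theorem statement11_general {K : Type} [NontriviallyNormedField K] [MeasurableSpace K] [BorelSpace K]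
    [LocallyCompactSpace K] (μ : Measure K) [Measure.IsAddHaarMeasure μ]
    (E : CDVF K) (I : (E.Fc → CX) →ₗ[CX] CX) (hI : E.IsIntegralF μ I)
    (a₁ a₂ : E.Fc) (n₁ n₂ : ℤ) (h : Polynomial E.Fc)
    (R : ℤ) (q : Polynomial E.O)
    (hdecomp : ∀ x : E.Fc, Polynomial.eval (a₁ + E.t ^ n₁ * x) h =
      Polynomial.eval a₁ h + E.t ^ R * Polynomial.eval x (q.map E.O.subtype))
    (hdepth : 0 ≤ R - n₂) :
    E.ConjHolds μ I a₁ a₂ n₁ n₂ h := by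
  intro f hf
  have hshift : Continuous fun u => E.resF (E.t ^ (R - n₂)) * (q.map E.res).eval u :=
    continuous_const.mul (q.map E.res).continuous
  obtain ⟨-, -, -, -, -, hswap⟩ :=
    kFubini_of_continuous_of_hasCompactSupport μ hf.1.continuous hf.2
  have hshearFubini := kFubini_of_continuous_of_hasCompactSupport μ
    (hf.1.continuous.shear hshift) (hf.2.shear hshift)
  simp only [E.liftAt₂_sub_eval f hdecomp hdepth]
  obtain ⟨hFubini, hrepeated⟩ := hI.fFubini_liftAt₂ a₁ (a₂ + h.eval a₁) n₁ n₂ hshearFubini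
  refine ⟨hFubini, hrepeated.trans ?_⟩
  rw [← hshearFubini.2.2.2.2.2, integral_integral_shear, hswap]

/-- The change-of-variables conjecture holds for data
a₁, a₂, n₁, n₂, h of non-negative depth (here the depth is R - n₂, where
h(a₁ + t^{n₁}X) = h(a₁) + t^R q(X) with q ∈ O_F[X] of non-zero image in K[X]). -/
theorem statement11 {K : Type} [NontriviallyNormedField K] [MeasurableSpace K] [BorelSpace K]
    [LocallyCompactSpace K] (μ : Measure K) [Measure.IsAddHaarMeasure μ]
    (E : CDVF K) (I : (E.Fc → CX) →ₗ[CX] CX) (hI : E.IsIntegralF μ I)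
    (a₁ a₂ : E.Fc) (n₁ n₂ : ℤ) (h : Polynomial E.Fc)
    (R : ℤ) (q : Polynomial E.O) (hq0 : q.coeff 0 = 0) (hqbar : q.map E.res ≠ 0)
    (hdecomp : ∀ x : E.Fc, Polynomial.eval (a₁ + E.t ^ n₁ * x) h =
      Polynomial.eval a₁ h + E.t ^ R * Polynomial.eval x (q.map E.O.subtype))
    (hdepth : 0 ≤ R - n₂) :
    E.ConjHolds μ I a₁ a₂ n₁ n₂ h :=
  statement11_general μ E I hI a₁ a₂ n₁ n₂ h R q hdecomp hdepth
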